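/- Let G be a connected simple graph on V₁ with n₁ vertices having constant curvature K₁ > 0, and let H be a connected simple graph on V₂ with n₂ vertices having constant curvature K₂ > 0. Then the Cartesian (box) product G □ H has constant curvature K where 1/K = 1/K₁ + 1/K₂; that is, the constant vector with value K₁K₂/(K₁+K₂) is a curvature vector for G □ H. -/

import Mathlib

open SimpleGraph Finset

namespace SimpleGraph

variable {V₁ V₂ : Type*} {G : SimpleGraph V₁} {H : SimpleGraph V₂}

lemma dist_boxProd {x y : V₁ × V₂} (hG : G.Reachable x.1 y.1) (hH : H.Reachable x.2 y.2) :
    (G □ H).dist x y = G.dist x.1 y.1 + H.dist x.2 y.2 := by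
  have hGH : (G □ H).Reachable x y := reachable_boxProd.mpr ⟨hG, hH⟩
  have := hGH.coe_dist_eq_edist
  rw [edist_boxProd, ← hG.coe_dist_eq_edist, ← hH.coe_dist_eq_edist] at this
  exact_mod_cast this

lemma sum_dist_boxProd [Fintype V₁] [Fintype V₂] (hG : G.Connected) (hH : H.Connected)
    (p : V₁ × V₂) :
    ∑ q, (G □ H).dist p q =
      Fintype.card V₂ * ∑ v, G.dist p.1 v + Fintype.card V₁ * ∑ w, H.dist p.2 w := by
  simp only [Fintype.sum_prod_type, dist_boxProd (hG _ _) (hH _ _), sum_add_distrib, sum_const,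
    card_univ, smul_eq_mul, ← mul_sum]

end SimpleGraph

/-- Products of constant-curvature graphs: if `G` has constant curvature `K₁ > 0` and
`H` has constant curvature `K₂ > 0`, then `G □ H` has constant curvature `K` with
`1/K = 1/K₁ + 1/K₂`, i.e. the constant vector with value `K₁K₂/(K₁+K₂)` is a
curvature vector for `G □ H`. -/
theorem boxProd_constant_curvature {V₁ V₂ : Type*} [Fintype V₁] [Fintype V₂]
    (G : SimpleGraph V₁) (H : SimpleGraph V₂)
    (hG : G.Connected) (hH : H.Connected)
    (K₁ K₂ : ℝ) (hK₁ : 0 < K₁) (hK₂ : 0 < K₂)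
    (h₁ : ∀ u : V₁, ∑ v : V₁, (G.dist u v : ℝ) * K₁ = (Fintype.card V₁ : ℝ))
    (h₂ : ∀ u : V₂, ∑ v : V₂, (H.dist u v : ℝ) * K₂ = (Fintype.card V₂ : ℝ)) :
    ∀ p : V₁ × V₂,
      ∑ q : V₁ × V₂, ((G.boxProd H).dist p q : ℝ) * (K₁ * K₂ / (K₁ + K₂)) =
        (Fintype.card V₁ : ℝ) * (Fintype.card V₂ : ℝ) := by
  intro p
  have hS₁ := h₁ p.1
  have hS₂ := h₂ p.2
  rw [← sum_mul] at hS₁ hS₂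
  rw [← sum_mul, ← Nat.cast_sum, sum_dist_boxProd hG hH]
  push_cast
  field_simp
  linear_combination (Fintype.card V₁ * K₁ : ℝ) * hS₂ + (Fintype.card V₂ * K₂ : ℝ) * hS₁
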